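/- arXiv:2009.03875 — 3 statements merged into one kernel-verified Lean document; each statement's English description precedes it below -/
import Mathlib

section
/- For every r > 1 and every finite collection of distinct primes p_1, …, p_M, there exists a weight w such that w ∈ RH_r^{p_i} for every i = 1, …, M, yet w ∉ RH_s for every s > 1; in particular, the intersection of the classes RH_r^{p_1}, …, RH_r^{p_M} is not equal to RH_r, and the intersection of RH_1^{p_1}, …, RH_1^{p_M} is not equal to RH_1. -/
open MeasureTheory Set

noncomputable section

/-- The `n`-adic interval `[(k-1)/n^m, k/n^m)` with `m, k : ℤ`. -/
def adicInterval (n : ℕ) (m k : ℤ) : Set ℝ :=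
  Set.Ico (((k : ℝ) - 1) / (n : ℝ) ^ m) ((k : ℝ) / (n : ℝ) ^ m)

/-- The `j`-th `n`-adic child (`1 ≤ j ≤ n`) of the `n`-adic interval with parameters `m, k`. -/
def adicChild (n : ℕ) (m k : ℤ) (j : ℕ) : Set ℝ :=
  Set.Ico (((k : ℝ) - 1) / (n : ℝ) ^ m + ((j : ℝ) - 1) / (n : ℝ) ^ (m + 1))
    (((k : ℝ) - 1) / (n : ℝ) ^ m + (j : ℝ) / (n : ℝ) ^ (m + 1))

/-- A measure on `ℝ` is doubling if there is `C > 0` with `μ(2I) ≤ C·μ(I)` for every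
bounded nondegenerate interval `I`, where `2I` has the same midpoint and twice the length. -/
def IsDoubling (μ : Measure ℝ) : Prop :=
  ∃ C : ℝ, 0 < C ∧ ∀ a b : ℝ, a < b →
    μ (Set.Ico (a - (b - a) / 2) (b + (b - a) / 2)) ≤ ENNReal.ofReal C * μ (Set.Ico a b)

/-- A measure on `ℝ` is `n`-adic doubling if there is `C > 0` such that for every `n`-adic
interval and any two of its `n`-adic children, the measures of the children are comparable. -/
def IsAdicDoubling (n : ℕ) (μ : Measure ℝ) : Prop :=
  ∃ C : ℝ, 0 < C ∧ ∀ m k : ℤ, ∀ j₁ j₂ : ℕ, 1 ≤ j₁ → j₁ ≤ n → 1 ≤ j₂ → j₂ ≤ n →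
    μ (adicChild n m k j₁) ≤ ENNReal.ofReal C * μ (adicChild n m k j₂)

/-- A weight: a nonnegative locally integrable function on `ℝ`. -/
def IsWeight (w : ℝ → ℝ) : Prop :=
  (∀ x, 0 ≤ w x) ∧ LocallyIntegrable w volume

/-- The reverse Hölder class `RH_r`: `(⨍_I w^r)^(1/r) ≤ C ⨍_I w` over all bounded
nondegenerate intervals `I`. -/
def MemRH (r : ℝ) (w : ℝ → ℝ) : Prop :=
  ∃ C : ℝ, 0 < C ∧ ∀ a b : ℝ, a < b →
    (⨍ x in Set.Ico a b, w x ^ r) ^ (1 / r) ≤ C * ⨍ x in Set.Ico a b, w x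

/-- The `p`-adic reverse Hölder class `RH_r^p`: the reverse Hölder inequality over all
`p`-adic intervals, together with `w dx` being `p`-adic doubling. -/
def MemRHadic (r : ℝ) (p : ℕ) (w : ℝ → ℝ) : Prop :=
  IsAdicDoubling p (volume.withDensity fun x => ENNReal.ofReal (w x)) ∧
  ∃ C : ℝ, 0 < C ∧ ∀ m k : ℤ,
    (⨍ x in adicInterval p m k, w x ^ r) ^ (1 / r) ≤ C * ⨍ x in adicInterval p m k, w x

/-- The Muckenhoupt class `A_r`: the `A_r` products over all bounded nondegenerate intervals
are uniformly bounded. -/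
def MemA (r : ℝ) (w : ℝ → ℝ) : Prop :=
  ∃ C : ℝ, ∀ a b : ℝ, a < b →
    (⨍ x in Set.Ico a b, w x) *
      (⨍ x in Set.Ico a b, w x ^ (-(1 / (r - 1)))) ^ (r - 1) ≤ C

/-- The `p`-adic Muckenhoupt class `A_r^p`: the `A_r` products over all `p`-adic intervals
are uniformly bounded. -/
def MemAadic (r : ℝ) (p : ℕ) (w : ℝ → ℝ) : Prop :=
  ∃ C : ℝ, ∀ m k : ℤ,
    (⨍ x in adicInterval p m k, w x) *
      (⨍ x in adicInterval p m k, w x ^ (-(1 / (r - 1)))) ^ (r - 1) ≤ C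

/-!
The weight `w(x) = |x|` for `x < 0`, `w(x) = 1` for `x ≥ 0` works for every base at once.
An `n`-adic interval never has `0` in its interior, and on an interval `I` lying on one side of
`0` the weight is constant or equal to `|x|`, so `sup_I w` is at most `2q` times the average of
`w` over any subinterval of length `|I| / q`. With `q = 1` this gives the reverse Hölder
inequality, with `q = n` the `n`-adic doubling property. On the intervals `[-T, T²)`, which
straddle `0`, both `w` and `w ^ s` have average of order `T`, and `T ^ (1 / s)` is not `O(T)`
as `T → 0`.
-/

open Filter Topology

section Average

variable {α : Type*} [MeasurableSpace α] {μ : Measure α} {s : Set α} {f : α → ℝ} {M : ℝ}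

lemma setIntegral_le_mul_measureReal (hμ : μ s < ⊤) (hf : ∀ x ∈ s, 0 ≤ f x)
    (hfM : ∀ x ∈ s, f x ≤ M) : ∫ x in s, f x ∂μ ≤ M * μ.real s :=
  (le_abs_self _).trans <| norm_setIntegral_le_of_norm_le_const hμ fun x hx => by
    rw [Real.norm_of_nonneg (hf x hx)]; exact hfM x hx

lemma setAverage_le_of_forall_le (hμ : μ s < ⊤) (hM : 0 ≤ M) (hf : ∀ x ∈ s, 0 ≤ f x)
    (hfM : ∀ x ∈ s, f x ≤ M) : ⨍ x in s, f x ∂μ ≤ M := by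
  rw [setAverage_eq, smul_eq_mul]
  rcases eq_or_lt_of_le (measureReal_nonneg : 0 ≤ μ.real s) with h0 | hpos
  · rw [← h0, inv_zero, zero_mul]; exact hM
  · rw [inv_mul_le_iff₀ hpos, mul_comm]
    exact setIntegral_le_mul_measureReal hμ hf hfM

lemma rpow_setAverage_rpow_le {r : ℝ} (hr : 0 < r) (hs : MeasurableSet s) (hμ : μ s < ⊤)
    (hM : 0 ≤ M) (hf : ∀ x ∈ s, 0 ≤ f x) (hfM : ∀ x ∈ s, f x ≤ M) :
    (⨍ x in s, f x ^ r ∂μ) ^ (1 / r) ≤ M := by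
  have havg : ⨍ x in s, f x ^ r ∂μ ≤ M ^ r :=
    setAverage_le_of_forall_le hμ (by positivity) (fun x hx => Real.rpow_nonneg (hf x hx) r)
      fun x hx => Real.rpow_le_rpow (hf x hx) (hfM x hx) hr.le
  have hnonneg : 0 ≤ ⨍ x in s, f x ^ r ∂μ := by
    rw [setAverage_eq, smul_eq_mul]
    exact mul_nonneg (inv_nonneg.2 measureReal_nonneg)
      (setIntegral_nonneg hs fun x hx => Real.rpow_nonneg (hf x hx) r)
  calc (⨍ x in s, f x ^ r ∂μ) ^ (1 / r) ≤ (M ^ r) ^ (1 / r) :=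
        Real.rpow_le_rpow hnonneg havg (by positivity)
    _ = M := by rw [← Real.rpow_mul hM, mul_one_div_cancel hr.ne', Real.rpow_one]

end Average

lemma eventually_mul_lt_rpow {a : ℝ} (ha : a < 1) (K : ℝ) :
    ∀ᶠ τ in 𝓝[>] (0 : ℝ), K * τ < τ ^ a := by
  filter_upwards [(tendsto_rpow_neg_nhdsGT_zero (sub_neg.2 ha)).eventually_gt_atTop K,
    self_mem_nhdsWithin] with τ hK (hτ : 0 < τ)
  calc K * τ < τ ^ (a - 1) * τ := mul_lt_mul_of_pos_right hK hτ
    _ = τ ^ a := by rw [Real.rpow_sub_one hτ.ne', div_mul_cancel₀ _ hτ.ne']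

namespace RHCounterexample

def weight (x : ℝ) : ℝ := if x < 0 then -x else 1

lemma weight_of_neg {x : ℝ} (hx : x < 0) : weight x = -x := if_pos hx

lemma weight_of_nonneg {x : ℝ} (hx : 0 ≤ x) : weight x = 1 := if_neg hx.not_gt

lemma weight_nonneg (x : ℝ) : 0 ≤ weight x := by
  unfold weight; split_ifs <;> linarith

lemma measurable_weight : Measurable weight :=
  Measurable.ite measurableSet_Iio measurable_neg measurable_const

lemma locallyIntegrable_weight_rpow {r : ℝ} (hr : 0 ≤ r) :
    LocallyIntegrable (fun x => weight x ^ r) volume := by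
  have hcont : Continuous fun x : ℝ => (|x| + 1) ^ r :=
    (continuous_abs.add continuous_const).rpow_const fun _ => Or.inr hr
  refine hcont.locallyIntegrable.mono (measurable_weight.pow_const r).aestronglyMeasurable
    (ae_of_all _ fun x => ?_)
  rw [Real.norm_of_nonneg (Real.rpow_nonneg (weight_nonneg x) r),
    Real.norm_of_nonneg (Real.rpow_nonneg (by positivity) r)]
  refine Real.rpow_le_rpow (weight_nonneg x) ?_ hr
  unfold weight; split_ifs <;> linarith [neg_le_abs x, abs_nonneg x]

lemma locallyIntegrable_weight : LocallyIntegrable weight volume := by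
  simpa using locallyIntegrable_weight_rpow zero_le_one

lemma integrableOn_weight_rpow_Ico {r : ℝ} (hr : 0 ≤ r) (a b : ℝ) :
    IntegrableOn (fun x => weight x ^ r) (Ico a b) :=
  ((locallyIntegrable_weight_rpow hr).integrableOn_isCompact isCompact_Icc).mono_set
    Ico_subset_Icc_self

lemma integrableOn_weight_Ico (a b : ℝ) : IntegrableOn weight (Ico a b) := by
  simpa using integrableOn_weight_rpow_Ico zero_le_one a b

lemma integral_weight_Ico_of_nonpos {a b : ℝ} (hab : a ≤ b) (hb : b ≤ 0) :
    ∫ x in Ico a b, weight x = (a ^ 2 - b ^ 2) / 2 := by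
  rw [setIntegral_congr_fun measurableSet_Ico fun x hx => weight_of_neg (hx.2.trans_le hb),
    integral_Ico_eq_integral_Ioo, ← integral_Ioc_eq_integral_Ioo,
    ← intervalIntegral.integral_of_le hab, intervalIntegral.integral_neg, integral_id]
  ring

lemma integral_weight_rpow_Ico_of_nonneg (r : ℝ) {a b : ℝ} (ha : 0 ≤ a) (hab : a ≤ b) :
    ∫ x in Ico a b, weight x ^ r = b - a := by
  rw [setIntegral_congr_fun measurableSet_Ico (g := fun _ => 1) fun x hx => by
      rw [weight_of_nonneg (ha.trans hx.1), Real.one_rpow],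
    setIntegral_const, Real.volume_real_Ico_of_le hab, smul_eq_mul, mul_one]

lemma setAverage_weight_Ico_of_nonpos {a b : ℝ} (hab : a < b) (hb : b ≤ 0) :
    ⨍ x in Ico a b, weight x = -(a + b) / 2 := by
  rw [setAverage_eq, Real.volume_real_Ico_of_le hab.le, integral_weight_Ico_of_nonpos hab.le hb,
    smul_eq_mul, inv_mul_eq_iff_eq_mul₀ (sub_pos.2 hab).ne']
  ring

lemma setAverage_weight_Ico_of_nonneg {a b : ℝ} (hab : a < b) (ha : 0 ≤ a) :
    ⨍ x in Ico a b, weight x = 1 := by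
  have h := integral_weight_rpow_Ico_of_nonneg 1 ha hab.le
  simp only [Real.rpow_one] at h
  rw [setAverage_eq, Real.volume_real_Ico_of_le hab.le, h, smul_eq_mul,
    inv_mul_cancel₀ (sub_pos.2 hab).ne']

lemma weight_le_setAverage_Ico {a b s t q x : ℝ} (hside : b ≤ 0 ∨ 0 ≤ a) (has : a ≤ s)
    (hst : s < t) (htb : t ≤ b) (hq : b - a ≤ q * (t - s)) (hx : x ∈ Ico a b) :
    weight x ≤ 2 * q * ⨍ y in Ico s t, weight y := by
  have hq1 : 1 ≤ q := by
    by_contra! h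
    nlinarith
  rcases hside with hb | ha
  · rw [weight_of_neg (hx.2.trans_le hb), setAverage_weight_Ico_of_nonpos hst (htb.trans hb)]
    nlinarith [hx.1]
  · rw [weight_of_nonneg (ha.trans hx.1), setAverage_weight_Ico_of_nonneg hst (ha.trans has)]
    linarith

lemma withDensity_weight_Ico (a b : ℝ) :
    volume.withDensity (fun x => ENNReal.ofReal (weight x)) (Ico a b) =
      ENNReal.ofReal (∫ x in Ico a b, weight x) := by
  rw [withDensity_apply _ measurableSet_Ico, ofReal_integral_eq_lintegral_ofReal
    (integrableOn_weight_Ico a b) (Eventually.of_forall weight_nonneg)]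

lemma adicInterval_nonpos_or_nonneg {n : ℕ} (hn : 0 < n) (m k : ℤ) :
    (k : ℝ) / (n : ℝ) ^ m ≤ 0 ∨ 0 ≤ ((k : ℝ) - 1) / (n : ℝ) ^ m := by
  have hpow : (0 : ℝ) < (n : ℝ) ^ m := zpow_pos (by exact_mod_cast hn) m
  rcases le_or_gt k 0 with hk | hk
  · exact .inl (div_nonpos_of_nonpos_of_nonneg (by exact_mod_cast hk) hpow.le)
  · have hk : (1 : ℝ) ≤ k := by exact_mod_cast hk
    exact .inr (div_nonneg (by linarith) hpow.le)

lemma adicChild_endpoints_within {n : ℕ} (hn : 0 < n) (m k : ℤ) {j : ℕ} (hj : 1 ≤ j)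
    (hjn : j ≤ n) :
    ((k : ℝ) - 1) / (n : ℝ) ^ m ≤ ((k : ℝ) - 1) / (n : ℝ) ^ m + ((j : ℝ) - 1) / (n : ℝ) ^ (m + 1) ∧
    ((k : ℝ) - 1) / (n : ℝ) ^ m + (j : ℝ) / (n : ℝ) ^ (m + 1) ≤ (k : ℝ) / (n : ℝ) ^ m := by
  have hn' : (0 : ℝ) < n := by exact_mod_cast hn
  have hpow : (0 : ℝ) < (n : ℝ) ^ m := zpow_pos hn' m
  have hj' : (1 : ℝ) ≤ j := by exact_mod_cast hj
  have hjn' : (j : ℝ) ≤ n := by exact_mod_cast hjn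
  rw [zpow_add_one₀ hn'.ne']
  constructor
  · have : 0 ≤ ((j : ℝ) - 1) / ((n : ℝ) ^ m * n) := div_nonneg (by linarith) (by positivity)
    linarith
  · rw [← sub_nonneg]
    have : (k : ℝ) / (n : ℝ) ^ m - (((k : ℝ) - 1) / (n : ℝ) ^ m + (j : ℝ) / ((n : ℝ) ^ m * n)) =
        (n - j) / ((n : ℝ) ^ m * n) := by
      field_simp
      ring
    rw [this]
    exact div_nonneg (by linarith) (by positivity)

lemma isAdicDoubling_weight {n : ℕ} (hn : 0 < n) :
    IsAdicDoubling n (volume.withDensity fun x => ENNReal.ofReal (weight x)) := by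
  have hn' : (0 : ℝ) < n := by exact_mod_cast hn
  refine ⟨2 * n, by positivity, fun m k j₁ j₂ hj₁ hj₁n hj₂ hj₂n => ?_⟩
  set a := ((k : ℝ) - 1) / (n : ℝ) ^ m
  set b := (k : ℝ) / (n : ℝ) ^ m
  set u := ((n : ℝ) ^ (m + 1))⁻¹
  have hu : 0 < u := inv_pos.2 (zpow_pos hn' _)
  have hba : b - a = n * u := by
    simp only [a, b, u, zpow_add_one₀ hn'.ne']
    field_simp
    ring
  have hlen : ∀ j : ℕ,
      a + (j : ℝ) / (n : ℝ) ^ (m + 1) - (a + ((j : ℝ) - 1) / (n : ℝ) ^ (m + 1)) = u :=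
    fun j => by simp only [u]; ring
  obtain ⟨has₁, ht₁b⟩ := adicChild_endpoints_within hn m k hj₁ hj₁n
  obtain ⟨has₂, ht₂b⟩ := adicChild_endpoints_within hn m k hj₂ hj₂n
  have hst : ∀ j : ℕ, a + ((j : ℝ) - 1) / (n : ℝ) ^ (m + 1) < a + (j : ℝ) / (n : ℝ) ^ (m + 1) :=
    fun j => by linarith [hlen j]
  have hbound : ∀ x ∈ adicChild n m k j₁,
      weight x ≤ 2 * n * ⨍ y in adicChild n m k j₂, weight y := fun x hx =>
    weight_le_setAverage_Ico (adicInterval_nonpos_or_nonneg hn m k) has₂ (hst j₂) ht₂b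
      (by rw [hlen, hba]) ⟨has₁.trans hx.1, hx.2.trans_le ht₁b⟩
  rw [adicChild, adicChild, withDensity_weight_Ico, withDensity_weight_Ico,
    ← ENNReal.ofReal_mul (by positivity)]
  refine ENNReal.ofReal_le_ofReal ?_
  calc ∫ x in adicChild n m k j₁, weight x
      ≤ (2 * n * ⨍ y in adicChild n m k j₂, weight y) * volume.real (adicChild n m k j₁) :=
        setIntegral_le_mul_measureReal measure_Ico_lt_top (fun x _ => weight_nonneg x) hbound
    _ = 2 * n * (volume.real (adicChild n m k j₂) * ⨍ y in adicChild n m k j₂, weight y) := by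
        rw [adicChild, adicChild, Real.volume_real_Ico_of_le (hst j₁).le,
          Real.volume_real_Ico_of_le (hst j₂).le, hlen, hlen]
        ring
    _ = 2 * n * ∫ y in adicChild n m k j₂, weight y :=
        congrArg _ (measure_smul_setAverage _ measure_Ico_lt_top.ne)

lemma reverseHolder_adicInterval_weight {n : ℕ} (hn : 0 < n) {r : ℝ} (hr : 0 < r) (m k : ℤ) :
    (⨍ x in adicInterval n m k, weight x ^ r) ^ (1 / r) ≤
      2 * ⨍ x in adicInterval n m k, weight x := by
  have hab : ((k : ℝ) - 1) / (n : ℝ) ^ m < (k : ℝ) / (n : ℝ) ^ m :=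
    div_lt_div_of_pos_right (by linarith) (zpow_pos (by exact_mod_cast hn) m)
  have hbound : ∀ x ∈ adicInterval n m k, weight x ≤ 2 * ⨍ y in adicInterval n m k, weight y :=
    fun x hx => by
      have h := weight_le_setAverage_Ico (q := 1) (adicInterval_nonpos_or_nonneg hn m k)
        le_rfl hab le_rfl (by linarith) hx
      rwa [mul_one] at h
  exact rpow_setAverage_rpow_le hr measurableSet_Ico measure_Ico_lt_top
    ((weight_nonneg _).trans (hbound _ (left_mem_Ico.2 hab))) (fun x _ => weight_nonneg x) hbound

lemma memRHadic_weight {n : ℕ} (hn : 0 < n) {r : ℝ} (hr : 0 < r) : MemRHadic r n weight :=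
  ⟨isAdicDoubling_weight hn, 2, two_pos, reverseHolder_adicInterval_weight hn hr⟩

lemma setAverage_weight_Ico_neg_sq_le {T : ℝ} (hT : 0 < T) :
    ⨍ x in Ico (-T) (T ^ 2), weight x ≤ 3 * T / 2 := by
  have hint : ∫ x in Ico (-T) (T ^ 2), weight x = 3 * T ^ 2 / 2 := by
    have h := integral_weight_rpow_Ico_of_nonneg 1 le_rfl (sq_nonneg T)
    simp only [Real.rpow_one] at h
    rw [← Ico_union_Ico_eq_Ico (by linarith) (sq_nonneg T),
      setIntegral_union Ico_disjoint_Ico_same measurableSet_Ico (integrableOn_weight_Ico _ _)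
        (integrableOn_weight_Ico _ _), integral_weight_Ico_of_nonpos (by linarith) le_rfl, h]
    ring
  rw [setAverage_eq, Real.volume_real_Ico_of_le (by nlinarith), hint, smul_eq_mul,
    inv_mul_le_iff₀ (by nlinarith)]
  nlinarith

lemma le_setAverage_weight_rpow_Ico_neg_sq {s T : ℝ} (hs : 0 ≤ s) (hT : 0 < T) (hT1 : T ≤ 1) :
    T / 2 ≤ ⨍ x in Ico (-T) (T ^ 2), weight x ^ s := by
  have hint : T ^ 2 ≤ ∫ x in Ico (-T) (T ^ 2), weight x ^ s := by
    calc T ^ 2 = ∫ x in Ico 0 (T ^ 2), weight x ^ s := by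
          rw [integral_weight_rpow_Ico_of_nonneg s le_rfl (sq_nonneg T), sub_zero]
      _ ≤ ∫ x in Ico (-T) (T ^ 2), weight x ^ s :=
          setIntegral_mono_set (integrableOn_weight_rpow_Ico hs _ _)
            (Eventually.of_forall fun x => Real.rpow_nonneg (weight_nonneg x) s)
            (Ico_subset_Ico_left (by linarith)).eventuallyLE
  rw [setAverage_eq, Real.volume_real_Ico_of_le (by nlinarith), smul_eq_mul,
    le_inv_mul_iff₀ (by nlinarith)]
  nlinarith

lemma not_memRH_weight {s : ℝ} (hs : 1 < s) : ¬ MemRH s weight := by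
  rintro ⟨C, hC, hRH⟩
  obtain ⟨τ, hτ, hτ0, hτ1⟩ :=
    ((eventually_mul_lt_rpow ((div_lt_one (by linarith)).2 hs) (3 * C)).and
      (Ioo_mem_nhdsGT (by norm_num : (0 : ℝ) < 1 / 2))).exists
  have hT : -(2 * τ) < (2 * τ) ^ 2 := by nlinarith
  refine lt_irrefl (τ ^ (1 / s)) ?_
  calc τ ^ (1 / s) = (2 * τ / 2) ^ (1 / s) := by rw [mul_div_cancel_left₀ τ two_ne_zero]
    _ ≤ (⨍ x in Ico (-(2 * τ)) ((2 * τ) ^ 2), weight x ^ s) ^ (1 / s) :=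
        Real.rpow_le_rpow (by linarith)
          (le_setAverage_weight_rpow_Ico_neg_sq (by linarith) (by linarith) (by linarith))
          (by positivity)
    _ ≤ C * ⨍ x in Ico (-(2 * τ)) ((2 * τ) ^ 2), weight x := hRH _ _ hT
    _ ≤ C * (3 * (2 * τ) / 2) := mul_le_mul_of_nonneg_left
        (setAverage_weight_Ico_neg_sq_le (by linarith)) hC.le
    _ = 3 * C * τ := by ring
    _ < τ ^ (1 / s) := hτ

end RHCounterexample

open RHCounterexample in
theorem inter_prime_RH_ne_RH_general (r : ℝ) (hr : 1 < r) (M : ℕ) (p : Fin M → ℕ)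
    (hp : ∀ i, (p i).Prime) :
    (∃ w : ℝ → ℝ, IsWeight w ∧ (∀ i, MemRHadic r (p i) w) ∧
      ∀ s : ℝ, 1 < s → ¬ MemRH s w) ∧
    {w : ℝ → ℝ | IsWeight w ∧ ∀ i, MemRHadic r (p i) w} ≠
      {w : ℝ → ℝ | IsWeight w ∧ MemRH r w} ∧
    {w : ℝ → ℝ | IsWeight w ∧ ∀ i, ∃ r' : ℝ, 1 < r' ∧ MemRHadic r' (p i) w} ≠
      {w : ℝ → ℝ | IsWeight w ∧ ∃ r' : ℝ, 1 < r' ∧ MemRH r' w} := by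
  have hw : IsWeight weight := ⟨weight_nonneg, locallyIntegrable_weight⟩
  have hadic : ∀ i, MemRHadic r (p i) weight := fun i => memRHadic_weight (hp i).pos (by linarith)
  refine ⟨⟨weight, hw, hadic, fun s hs => not_memRH_weight hs⟩, fun h => ?_, fun h => ?_⟩
  · exact not_memRH_weight hr ((Set.ext_iff.1 h weight).1 ⟨hw, hadic⟩).2
  · obtain ⟨r', hr', hRH⟩ := ((Set.ext_iff.1 h weight).1 ⟨hw, fun i => ⟨r, hr, hadic i⟩⟩).2
    exact not_memRH_weight hr' hRH

/-- For every `r > 1` and every finite collection of distinct primes `p i`, there exists a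
weight belonging to `RH_r^{p i}` for every `i` but to no `RH_s`, `s > 1`; in particular
`⋂ᵢ RH_r^{pᵢ} ≠ RH_r` and `⋂ᵢ RH_1^{pᵢ} ≠ RH_1`. -/
theorem inter_prime_RH_ne_RH (r : ℝ) (hr : 1 < r) (M : ℕ) (p : Fin M → ℕ)
    (hp : ∀ i, (p i).Prime) (hinj : Function.Injective p) :
    (∃ w : ℝ → ℝ, IsWeight w ∧ (∀ i, MemRHadic r (p i) w) ∧
      ∀ s : ℝ, 1 < s → ¬ MemRH s w) ∧
    {w : ℝ → ℝ | IsWeight w ∧ ∀ i, MemRHadic r (p i) w} ≠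
      {w : ℝ → ℝ | IsWeight w ∧ MemRH r w} ∧
    {w : ℝ → ℝ | IsWeight w ∧ ∀ i, ∃ r' : ℝ, 1 < r' ∧ MemRHadic r' (p i) w} ≠
      {w : ℝ → ℝ | IsWeight w ∧ ∃ r' : ℝ, 1 < r' ∧ MemRH r' w} :=
  inter_prime_RH_ne_RH_general r hr M p hp
end
end

section
/- Let p > q be distinct primes, let m(p,q) be the smallest positive integer m such that q^{p−1} ≢ 1 (mod p^{m+1}), and suppose C ≥ 0 is an integer such that the multiplicative order of q^{p−1} in (ℤ/p^mℤ)^× equals p^{m−1−C} for all sufficiently large m. Then for every integer m_1 > m(p,q)/(q−1) and every integer k with 1 ≤ k ≤ p^{m_1(q−1)} and k ≡ 1 (mod p^{C+1}), there exist infinitely many pairs (m_2, j) of positive integers with 1 ≤ j ≤ q^{m_2(p−1)}, j ≡ −1 (mod q), and k·q^{m_2(p−1)} − j·p^{m_1(q−1)} = 1 (equivalently k/p^{m_1(q−1)} − j/q^{m_2(p−1)} = 1/(p^{m_1(q−1)} q^{m_2(p−1)})). -/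
/-!
Write `q ^ (p - 1) = 1 + p ^ v * b` with `p ∤ b` (Fermat gives `v ≥ 1`). For odd `p` this
element has order `p ^ n` modulo `p ^ (n + v)`, which both forces `v = C + 1` and shows that it
generates the kernel of `(ℤ/p^(n+v))ˣ → (ℤ/p^v)ˣ`, a group of the same order. Since
`k ≡ 1 (mod p ^ v)`, `k⁻¹` lies in that kernel, so `k q ^ ((p - 1) e) ≡ 1 (mod p ^ L)` along a
whole residue class of exponents `e`, in particular for arbitrarily large `e = m₂`. Then
`j = (k q ^ (m₂ (p - 1)) - 1) / p ^ L` works, and `j ≡ -1 (mod q)` because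
`p ^ (m₁ (q - 1)) ≡ 1 (mod q)`.
-/

section

variable {p : ℕ}

theorem exists_pow_sub_one_eq_one_add_prime_pow_mul (hp : p.Prime) {q : ℕ} (hq : 1 < q)
    (hqp : q.Coprime p) : ∃ v b : ℕ, v ≠ 0 ∧ ¬ p ∣ b ∧ q ^ (p - 1) = 1 + p ^ v * b := by
  have hfermat : q ^ (p - 1) ≡ 1 [MOD p] := by
    simpa [Nat.totient_prime hp] using Nat.ModEq.pow_totient hqp
  have hq1 : 1 < q ^ (p - 1) := Nat.one_lt_pow (by have := hp.two_le; omega) hq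
  obtain ⟨v, b, hb, hvb⟩ :=
    Nat.exists_eq_pow_mul_and_not_dvd (show q ^ (p - 1) - 1 ≠ 0 by omega) p hp.ne_one
  refine ⟨v, b, ?_, hb, by omega⟩
  rintro rfl
  exact hb (by simpa [hvb] using (Nat.modEq_iff_dvd' hq1.le).mp hfermat.symm)

theorem orderOf_one_add_prime_pow_mul (hp : p.Prime) (hp2 : p ≠ 2) {v b : ℕ} (hv : v ≠ 0)
    (hb : ¬ p ∣ b) (n : ℕ) :
    orderOf ((1 + p ^ v * b : ℕ) : ZMod (p ^ (n + v))) = p ^ n := by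
  have hpm : v + 2 ≤ p * v := by
    have := hp.two_le
    have : 3 ≤ p := by omega
    nlinarith [Nat.pos_of_ne_zero hv]
  have := ZMod.orderOf_one_add_mul_prime_pow hp v hv hpm b (by exact_mod_cast hb) n
  push_cast
  exact_mod_cast this

theorem eq_add_one_of_eventually_orderOf_eq (hp : p.Prime) (hp2 : p ≠ 2) {v b : ℕ} (hv : v ≠ 0)
    (hb : ¬ p ∣ b) {C : ℕ}
    (hC : ∃ M₀ : ℕ, ∀ m : ℕ, M₀ ≤ m →
      orderOf ((1 + p ^ v * b : ℕ) : ZMod (p ^ m)) = p ^ (m - 1 - C)) :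
    v = C + 1 := by
  obtain ⟨M₀, hM₀⟩ := hC
  have h := hM₀ (M₀ + C + v) (by omega)
  rw [orderOf_one_add_prime_pow_mul hp hp2 hv hb] at h
  have := Nat.pow_right_injective hp.two_le h
  omega

theorem card_ker_unitsMap_prime_pow (hp : p.Prime) {v : ℕ} (hv : v ≠ 0) (n : ℕ) :
    Nat.card (ZMod.unitsMap (pow_dvd_pow p (Nat.le_add_left v n))).ker = p ^ n := by
  have : NeZero (p ^ (n + v)) := ⟨pow_ne_zero _ hp.ne_zero⟩
  have : NeZero (p ^ v) := ⟨pow_ne_zero _ hp.ne_zero⟩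
  have hmul := (ZMod.unitsMap (pow_dvd_pow p (Nat.le_add_left v n))).ker.card_mul_index
  rw [Subgroup.index_ker, MonoidHom.range_eq_top.mpr (ZMod.unitsMap_surjective _),
    Subgroup.card_top] at hmul
  simp only [Nat.card_eq_fintype_card, ZMod.card_units_eq_totient] at hmul ⊢
  rw [Nat.totient_prime_pow hp (show 0 < n + v by omega),
    Nat.totient_prime_pow hp (Nat.pos_of_ne_zero hv), show n + v - 1 = n + (v - 1) by omega,
    pow_add p n (v - 1), mul_assoc] at hmul
  exact Nat.eq_of_mul_eq_mul_right
    (Nat.mul_pos (pow_pos hp.pos _) (Nat.sub_pos_of_lt hp.one_lt)) hmul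

theorem unitOfCoprime_mem_ker_unitsMap {m d : ℕ} (hd : d ∣ m) {x : ℕ} (hx : x.Coprime m) :
    ZMod.unitOfCoprime x hx ∈ (ZMod.unitsMap hd).ker ↔ x ≡ 1 [MOD d] := by
  rw [MonoidHom.mem_ker, ← Units.val_inj, ZMod.unitsMap_val, ZMod.coe_unitOfCoprime,
    ZMod.cast_natCast hd, Units.val_one, ← Nat.cast_one, ZMod.natCast_eq_natCast_iff]

theorem exists_natCast_mul_pow_eq_one (hp : p.Prime) (hp2 : p ≠ 2) {v b : ℕ} (hv : v ≠ 0)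
    (hb : ¬ p ∣ b) {k : ℕ} (hk : k ≡ 1 [MOD p ^ v]) (n : ℕ) :
    ∃ t : ℕ, (k : ZMod (p ^ (n + v))) * ((1 + p ^ v * b : ℕ) : ZMod (p ^ (n + v))) ^ t = 1 := by
  have hcop : ∀ y : ℕ, y ≡ 1 [MOD p ^ v] → y.Coprime (p ^ (n + v)) := fun y hy =>
    (Nat.Coprime.coprime_dvd_right (dvd_pow_self p hv) (by simpa using hy.gcd_eq)).pow_right _
  have hx : 1 + p ^ v * b ≡ 1 [MOD p ^ v] := by simp [Nat.ModEq]
  set K := (ZMod.unitsMap (pow_dvd_pow p (Nat.le_add_left v n))).ker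
  set g := ZMod.unitOfCoprime _ (hcop _ hx)
  set u := ZMod.unitOfCoprime _ (hcop _ hk)
  have hgK : g ∈ K := (unitOfCoprime_mem_ker_unitsMap _ _).mpr hx
  have huK : u ∈ K := (unitOfCoprime_mem_ker_unitsMap _ _).mpr hk
  have hgen : Subgroup.zpowers g = K := by
    refine Subgroup.eq_of_le_of_card_ge (Subgroup.zpowers_le.mpr hgK) ?_
    rw [card_ker_unitsMap_prime_pow hp hv, Nat.card_zpowers, ← orderOf_units,
      ZMod.coe_unitOfCoprime, orderOf_one_add_prime_pow_mul hp hp2 hv hb]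
  obtain ⟨t, ht⟩ := mem_powers_iff_mem_zpowers.mpr (hgen ▸ K.inv_mem huK)
  refine ⟨t, ?_⟩
  have := congrArg Units.val (mul_inv_cancel u)
  rw [← ht] at this
  simpa [u, g] using this

theorem exists_ge_mul_pow_modEq_one (hp : p.Prime) (hp2 : p ≠ 2) {v b : ℕ} (hv : v ≠ 0)
    (hb : ¬ p ∣ b) {k : ℕ} (hk : k ≡ 1 [MOD p ^ v]) (L N : ℕ) :
    ∃ e ≥ N, k * (1 + p ^ v * b) ^ e ≡ 1 [MOD p ^ L] := by
  obtain ⟨t, ht⟩ := exists_natCast_mul_pow_eq_one hp hp2 hv hb hk L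
  refine ⟨t + p ^ L * N, le_add_left (Nat.le_mul_of_pos_left N (pow_pos hp.pos L)), ?_⟩
  refine Nat.ModEq.of_dvd (pow_dvd_pow p (Nat.le_add_right L v)) ?_
  rw [← ZMod.natCast_eq_natCast_iff, Nat.cast_mul, Nat.cast_pow, pow_add _ t, pow_mul,
    ← orderOf_one_add_prime_pow_mul hp hp2 hv hb L, pow_orderOf_eq_one, one_pow, mul_one, ht,
    Nat.cast_one]

theorem exists_mul_sub_mul_eq_one {k P Q : ℕ} (hk : 1 ≤ k) (hkP : k ≤ P) (hPQ : P < Q)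
    (h : k * Q ≡ 1 [MOD P]) : ∃ j : ℕ, 1 ≤ j ∧ j ≤ Q ∧ (k : ℤ) * Q - j * P = 1 := by
  have hQ : Q ≤ k * Q := Nat.le_mul_of_pos_left Q hk
  obtain ⟨j, hj⟩ := (Nat.modEq_iff_dvd' (by omega)).mp h.symm
  refine ⟨j, ?_, ?_, ?_⟩
  · exact Nat.pos_of_ne_zero (by rintro rfl; omega)
  · refine (Nat.lt_of_mul_lt_mul_left (a := P) ?_).le
    calc P * j = k * Q - 1 := hj.symm
      _ < k * Q := by omega
      _ ≤ P * Q := Nat.mul_le_mul_right Q hkP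
  · zify [show 1 ≤ k * Q by omega] at hj
    linarith

theorem natCast_eq_neg_one_of_mul_pow_sub_mul_pow_eq_one {q k j n m : ℕ} (hq : q.Prime)
    (hqp : ¬ q ∣ p) (hn : n ≠ 0)
    (h : (k : ℤ) * (q : ℤ) ^ n - (j : ℤ) * (p : ℤ) ^ (m * (q - 1)) = 1) :
    (j : ZMod q) = -1 := by
  have : Fact q.Prime := ⟨hq⟩
  have hp : (p : ZMod q) ^ (m * (q - 1)) = 1 := by
    rw [pow_mul', ZMod.pow_card_sub_one_eq_one (by rwa [Ne, ZMod.natCast_eq_zero_iff]), one_pow]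
  have h' := congrArg (Int.cast : ℤ → ZMod q) h
  push_cast at h'
  rw [ZMod.natCast_self, zero_pow hn, hp] at h'
  linear_combination -h'

end

theorem arithmetic_progression_pairs_general (p q : ℕ) (hp : p.Prime) (hq : q.Prime) (hlt : q < p)
    (mpq : ℕ)
    (C : ℕ)
    (hC : ∃ M₀ : ℕ, ∀ m : ℕ, M₀ ≤ m →
      orderOf ((q : ZMod (p ^ m)) ^ (p - 1)) = p ^ (m - 1 - C)) :
    ∀ m₁ : ℕ, mpq < m₁ * (q - 1) →
      ∀ k : ℕ, 1 ≤ k → k ≤ p ^ (m₁ * (q - 1)) → k ≡ 1 [MOD p ^ (C + 1)] →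
        ∀ N : ℕ, ∃ m₂ j : ℕ, N ≤ m₂ ∧ 0 < m₂ ∧ 1 ≤ j ∧ j ≤ q ^ (m₂ * (p - 1)) ∧
          (j : ZMod q) = -1 ∧
          (k : ℤ) * (q : ℤ) ^ (m₂ * (p - 1)) - (j : ℤ) * (p : ℤ) ^ (m₁ * (q - 1)) = 1 := by
  intro m₁ _ k hk1 hk2 hkC N
  have hq2 := hq.two_le
  have hp2 : p ≠ 2 := by omega
  obtain ⟨v, b, hv, hb, hx⟩ := exists_pow_sub_one_eq_one_add_prime_pow_mul hp hq2
    ((Nat.coprime_primes hq hp).mpr (by omega))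
  have hvC : v = C + 1 :=
    eq_add_one_of_eventually_orderOf_eq hp hp2 hv hb (by simpa [← hx] using hC)
  set L := m₁ * (q - 1)
  obtain ⟨m₂, hm₂N, hm₂⟩ :=
    exists_ge_mul_pow_modEq_one hp hp2 hv hb (hvC ▸ hkC) L (N + p ^ L + 1)
  rw [← hx, ← pow_mul, mul_comm (p - 1) m₂] at hm₂
  have hQ : p ^ L < q ^ (m₂ * (p - 1)) :=
    calc p ^ L < m₂ := by omega
      _ < q ^ m₂ := Nat.lt_pow_self hq2
      _ ≤ q ^ (m₂ * (p - 1)) := Nat.pow_le_pow_right hq.pos (Nat.le_mul_of_pos_right m₂ (by omega))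
  obtain ⟨j, hj1, hjQ, hZ⟩ := exists_mul_sub_mul_eq_one hk1 hk2 hQ hm₂
  refine ⟨m₂, j, by omega, by omega, hj1, hjQ, ?_, hZ⟩
  exact natCast_eq_neg_one_of_mul_pow_sub_mul_pow_eq_one hq
    (fun h => by have := (Nat.prime_dvd_prime_iff_eq hq hp).mp h; omega)
    (Nat.mul_ne_zero (by omega) (by omega)) hZ

/-- Let `p > q` be distinct primes, `mpq` the smallest positive integer `m` with
`q^(p-1) ≢ 1 (mod p^(m+1))`, and `C ≥ 0` such that the order of `q^(p-1)` in `(ℤ/p^mℤ)ˣ`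
equals `p^(m-1-C)` for all large `m`.  Then for every `m₁ > mpq/(q-1)` and every
`1 ≤ k ≤ p^(m₁(q-1))` with `k ≡ 1 (mod p^(C+1))` there are infinitely many pairs `(m₂, j)`
with `1 ≤ j ≤ q^(m₂(p-1))`, `j ≡ -1 (mod q)` and `k·q^(m₂(p-1)) - j·p^(m₁(q-1)) = 1`. -/
theorem arithmetic_progression_pairs (p q : ℕ) (hp : p.Prime) (hq : q.Prime) (hlt : q < p)
    (mpq : ℕ) (hmpq_pos : 0 < mpq)
    (hmpq : ¬ q ^ (p - 1) ≡ 1 [MOD p ^ (mpq + 1)])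
    (hmpq_min : ∀ m' : ℕ, 0 < m' → ¬ q ^ (p - 1) ≡ 1 [MOD p ^ (m' + 1)] → mpq ≤ m')
    (C : ℕ)
    (hC : ∃ M₀ : ℕ, ∀ m : ℕ, M₀ ≤ m →
      orderOf ((q : ZMod (p ^ m)) ^ (p - 1)) = p ^ (m - 1 - C)) :
    ∀ m₁ : ℕ, mpq < m₁ * (q - 1) →
      ∀ k : ℕ, 1 ≤ k → k ≤ p ^ (m₁ * (q - 1)) → k ≡ 1 [MOD p ^ (C + 1)] →
        ∀ N : ℕ, ∃ m₂ j : ℕ, N ≤ m₂ ∧ 0 < m₂ ∧ 1 ≤ j ∧ j ≤ q ^ (m₂ * (p - 1)) ∧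
          (j : ZMod q) = -1 ∧
          (k : ℤ) * (q : ℤ) ^ (m₂ * (p - 1)) - (j : ℤ) * (p : ℤ) ^ (m₁ * (q - 1)) = 1 :=
  arithmetic_progression_pairs_general p q hp hq hlt mpq C hC
end

section
/- Let p > q be distinct primes. There exist a sequence (I_ℓ)_{ℓ≥1} of q-adic subintervals of [0,1) and a sequence (α_ℓ)_{ℓ≥1} of positive integers such that: (1) letting J^ℓ denote the smallest p-adic interval containing I_ℓ, the intervals (J^ℓ)_{ℓ≥1} are pairwise disjoint and contained in [0,1) (in particular the I_ℓ are pairwise disjoint); (2) for each positive integer α there are only finitely many ℓ with α_ℓ = α; (3) for each ℓ, 0 < Υ(J^ℓ) − Z(I_ℓ) ≤ q^{−100·α_ℓ}·|I_ℓ|. -/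
/-!
Fix `α`, put `E = q^(100α)` and choose `M` with `p^(M+1)` much larger than `E`. By the Chinese
remainder theorem pick `N ≡ 1 (mod p)`, `N ≡ p^(M+1) (mod q)` with `N / p^(M+1)` just above
`1 / E`, and by Euler's theorem pick `m` with `q^(m+1) ≡ 1 (mod p^(M+1))` and `q^m ≥ p^(M+1)`.
Then `t = N / p^(M+1)` is `Υ(J)` for a `p`-adic interval `J` of length `p^(-M)`, while
`t (1 - q^(-(m+1))) = K / q^(m+1)` with `K ≡ -1 (mod q)`, so it is `Z(I)` for a `q`-adic interval
`I` of length `q^(-m)`, and `Υ(J) - Z(I) = t q^(-(m+1)) ≤ q^(-100α) |I|`. As `I` is shorter than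
the children of `J` and contains points on both sides of `Υ(J)`, `J` is the smallest `p`-adic
interval containing `I`. Finally `J ⊆ [q^(-100α), q^(2-100α))`, and these bands are disjoint
for distinct `α`.
-/

open Set

noncomputable section

/-- `Z(I)`: the left endpoint of the rightmost `q`-adic child of the `q`-adic interval with
parameters `m, k`, namely `(k-1)/q^m + (q-1)/q^(m+1)`. -/
def Zpt (q : ℕ) (m k : ℤ) : ℝ :=
  ((k : ℝ) - 1) / (q : ℝ) ^ m + ((q : ℝ) - 1) / (q : ℝ) ^ (m + 1)

/-- `Υ(J)`: the right endpoint of the leftmost `p`-adic child of the `p`-adic interval with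
parameters `m, k`, namely `(k-1)/p^m + 1/p^(m+1)`. -/
def Upt (p : ℕ) (m k : ℤ) : ℝ :=
  ((k : ℝ) - 1) / (p : ℝ) ^ m + 1 / (p : ℝ) ^ (m + 1)

/-- The `p`-adic interval with parameters `m, k` is the smallest `p`-adic interval
containing the set `s`. -/
def IsSmallestAdicContaining (p : ℕ) (m k : ℤ) (s : Set ℝ) : Prop :=
  s ⊆ adicInterval p m k ∧
  ∀ m' k' : ℤ, s ⊆ adicInterval p m' k' → adicInterval p m k ⊆ adicInterval p m' k'

section AdicIntervals

variable {n : ℕ} {m m' k k' : ℤ}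

theorem mem_adicInterval_iff (hn : 0 < n) {x : ℝ} :
    x ∈ adicInterval n m k ↔ ⌊x * (n : ℝ) ^ m⌋ = k - 1 := by
  have hpos : (0 : ℝ) < (n : ℝ) ^ m := zpow_pos (by exact_mod_cast hn) m
  rw [adicInterval, mem_Ico, Int.floor_eq_iff, div_le_iff₀ hpos, lt_div_iff₀ hpos]
  push_cast
  ring_nf

theorem floor_mul_zpow_of_le (hn : 0 < n) (h : m' ≤ m) (x : ℝ) :
    ⌊x * (n : ℝ) ^ m'⌋ = ⌊x * (n : ℝ) ^ m⌋ / ((n ^ (m - m').toNat : ℕ) : ℤ) := by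
  rw [← Int.floor_div_natCast]
  congr 1
  push_cast
  rw [← zpow_natCast, Int.toNat_of_nonneg (by omega), mul_div_assoc,
    ← zpow_sub₀ (by positivity), sub_sub_cancel]

theorem adicInterval_subset_of_le (hn : 0 < n) (h : m' ≤ m) {x : ℝ}
    (hx : x ∈ adicInterval n m k) (hx' : x ∈ adicInterval n m' k') :
    adicInterval n m k ⊆ adicInterval n m' k' := by
  intro y hy
  rw [mem_adicInterval_iff hn] at hx hx' hy ⊢
  rw [floor_mul_zpow_of_le hn h] at hx' ⊢
  rwa [hy, ← hx]

theorem notMem_adicInterval_of_lt_of_le (hn : 0 < n) {l : ℤ} (i : ℤ) (hl : l ≤ m) {x y : ℝ}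
    (hxi : x < i / (n : ℝ) ^ l) (hiy : i / (n : ℝ) ^ l ≤ y) (hx : x ∈ adicInterval n m k) :
    y ∉ adicInterval n m k := by
  have hpos : (0 : ℝ) < (n : ℝ) ^ m := zpow_pos (by exact_mod_cast hn) m
  have hgrid :
      i / (n : ℝ) ^ l * (n : ℝ) ^ m = ((i * (n : ℤ) ^ (m - l).toNat : ℤ) : ℝ) := by
    push_cast
    rw [← zpow_natCast, Int.toNat_of_nonneg (by omega), div_mul_eq_mul_div, mul_div_assoc,
      ← zpow_sub₀ (by positivity)]
  have hy := Int.le_floor.mpr (hgrid ▸ mul_le_mul_of_nonneg_right hiy hpos.le)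
  have hx' := Int.floor_lt.mpr (hgrid ▸ mul_lt_mul_of_pos_right hxi hpos)
  rw [mem_adicInterval_iff hn] at hx ⊢
  omega

theorem Upt_eq (hn : n ≠ 0) :
    Upt n m k = (((k - 1) * n + 1 : ℤ) : ℝ) / (n : ℝ) ^ (m + 1) := by
  push_cast
  rw [Upt, zpow_add_one₀ (by exact_mod_cast hn)]
  field_simp

theorem Zpt_eq (hn : n ≠ 0) : Zpt n m k = (n * k - 1) / (n : ℝ) ^ (m + 1) := by
  rw [Zpt, zpow_add_one₀ (by exact_mod_cast hn)]
  field_simp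
  ring

theorem adicInterval_eq_Ico_Upt (hn : n ≠ 0) :
    adicInterval n m k =
      Ico (Upt n m k - 1 / (n : ℝ) ^ (m + 1)) (Upt n m k + (n - 1) / (n : ℝ) ^ (m + 1)) := by
  rw [adicInterval, Upt, zpow_add_one₀ (by exact_mod_cast hn)]
  congr 1 <;> field_simp <;> ring

theorem adicInterval_eq_Ico_Zpt (hn : n ≠ 0) :
    adicInterval n m k =
      Ico (Zpt n m k - (n - 1) / (n : ℝ) ^ (m + 1)) (Zpt n m k + 1 / (n : ℝ) ^ (m + 1)) := by
  rw [adicInterval, Zpt, zpow_add_one₀ (by exact_mod_cast hn)]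
  congr 1 <;> field_simp <;> ring

theorem isSmallestAdicContaining_of_straddle (hn : 0 < n) {s : Set ℝ}
    (hs : s ⊆ adicInterval n m k) {x y : ℝ} (hx : x ∈ s) (hy : y ∈ s)
    (hxu : x < Upt n m k) (huy : Upt n m k ≤ y) : IsSmallestAdicContaining n m k s := by
  refine ⟨hs, fun m' k' hs' => ?_⟩
  rcases le_or_gt m' m with h | h
  · exact adicInterval_subset_of_le hn h (hs hx) (hs' hx)
  · rw [Upt_eq hn.ne'] at hxu huy
    exact notMem_adicInterval_of_lt_of_le hn (l := m + 1) _ (by omega) hxu huy (hs' hx) (hs' hy)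
      |>.elim

end AdicIntervals

theorem isSmallestAdicContaining_of_sub_eq {p q : ℕ} (hp : 2 ≤ p) (hq : 0 < q) {M m kJ kI : ℤ}
    (ht₀ : 0 < Upt p M kJ) (ht₁ : Upt p M kJ < 1)
    (hsub : Upt p M kJ - Zpt q m kI = Upt p M kJ / (q : ℝ) ^ (m + 1))
    (hlevel : (p : ℝ) ^ (M + 1) ≤ (q : ℝ) ^ m) :
    IsSmallestAdicContaining p M kJ (adicInterval q m kI) := by
  have hq' : (0 : ℝ) < q := by exact_mod_cast hq
  have hp' : (2 : ℝ) ≤ p := by exact_mod_cast hp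
  rw [adicInterval_eq_Ico_Zpt hq.ne']
  have hJ := (adicInterval_eq_Ico_Upt (m := M) (k := kJ) (by omega : p ≠ 0)).ge
  set t := Upt p M kJ
  set z := Zpt q m kI
  set u := 1 / (q : ℝ) ^ (m + 1) with hu_def
  set v := 1 / (p : ℝ) ^ (M + 1) with hv_def
  have hu : 0 < u := by positivity
  have hv : 0 < v := by positivity
  have hqu : q * u ≤ v := calc
    q * u = 1 / (q : ℝ) ^ m := by rw [hu_def, zpow_add_one₀ hq'.ne']; field_simp
    _ ≤ v := one_div_le_one_div_of_le (by positivity) hlevel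
  have hdivQ (a : ℝ) : a / (q : ℝ) ^ (m + 1) = a * u := by rw [hu_def, mul_one_div]
  have hdivP (a : ℝ) : a / (p : ℝ) ^ (M + 1) = a * v := by rw [hv_def, mul_one_div]
  simp only [hdivQ, hdivP] at hsub hJ ⊢
  have htu : t * u < u := mul_lt_of_lt_one_left hu ht₁
  have htu₀ : 0 < t * u := mul_pos ht₀ hu
  have hpv : v ≤ (p - 1) * v := le_mul_of_one_le_left hv.le (by linarith)
  have hqu' : u ≤ q * u := le_mul_of_one_le_left hu.le (by exact_mod_cast hq)
  have hI_sub_J : Ico (z - (q - 1) * u) (z + u) ⊆ Ico (t - v) (t + (p - 1) * v) :=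
    Ico_subset_Ico (by linarith) (by linarith)
  have ht_mem : t ∈ Ico (z - (q - 1) * u) (z + u) := ⟨by linarith, by linarith⟩
  exact isSmallestAdicContaining_of_straddle (by omega) (hI_sub_J.trans hJ)
    (left_mem_Ico.mpr (by linarith)) ht_mem (by linarith) le_rfl

theorem exists_mem_Ico_modEq_modEq {a b : ℕ} (hab : a.Coprime b) (ha : 0 < a) (hb : 0 < b)
    (u v : ℕ) (x : ℤ) :
    ∃ N : ℤ, x ≤ N ∧ N < x + a * b ∧ N ≡ u [ZMOD a] ∧ N ≡ v [ZMOD b] := by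
  obtain ⟨c, hca, hcb⟩ := Nat.chineseRemainder hab u v
  have hab₀ : (0 : ℤ) < a * b := by positivity
  have hN : x + (c - x) % (a * b) ≡ c [ZMOD a * b] := by
    simpa using (Int.mod_modEq (c - x) (a * b)).add_left x
  exact ⟨_, by linarith [Int.emod_nonneg (c - x) hab₀.ne'],
    by linarith [Int.emod_lt_of_pos (c - x) hab₀],
    (hN.of_mul_right _).trans (Int.natCast_modEq_iff.mpr hca),
    (hN.of_mul_left _).trans (Int.natCast_modEq_iff.mpr hcb)⟩

theorem exists_pow_modEq_one_of_le {q P : ℕ} (hqP : q.Coprime P) (hq : 2 ≤ q) :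
    ∃ m : ℕ, P ≤ q ^ m ∧ q ^ (m + 1) ≡ 1 [MOD P] := by
  have hP : 0 < P := Nat.pos_of_ne_zero (by rintro rfl; simp at hqP; omega)
  have hφ : 0 < Nat.totient P := Nat.totient_pos.mpr hP
  refine ⟨Nat.totient P * (P + 1) - 1, ?_, ?_⟩
  · calc P ≤ Nat.totient P * (P + 1) - 1 := by have := Nat.le_mul_of_pos_left (P + 1) hφ; omega
      _ ≤ q ^ (Nat.totient P * (P + 1) - 1) := (Nat.lt_pow_self (by omega)).le
  · rw [Nat.sub_add_cancel (Nat.mul_pos hφ P.succ_pos), pow_mul]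
    simpa using (Nat.ModEq.pow_totient hqP).pow (P + 1)

/-- `N / P` and `K / q^(m+1)` become `Υ(J)` and `Z(I)`; the identity `K P + N = N q^(m+1)` says
`Υ(J) - Z(I) = Υ(J) / q^(m+1)`, and `N ≡ P (mod q)` is what makes `K ≡ -1 (mod q)`. -/
theorem exists_numerators {p q P E : ℕ} (hpq : p.Coprime q) (hp : 0 < p) (hq : 2 ≤ q)
    (hqP : q.Coprime P) (hE : 0 < E) (hEP : (p * q + 1) * E ≤ P) :
    ∃ (N K : ℤ) (m : ℕ), (p : ℤ) ∣ N - 1 ∧ (q : ℤ) ∣ K + 1 ∧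
      K * P + N = N * q ^ (m + 1) ∧      P + E ≤ N * E ∧ N * E ≤ q * P ∧ P ≤ q ^ m := by
  obtain ⟨N, hN₁, hN₂, hNp, hNq⟩ :=
    exists_mem_Ico_modEq_modEq hpq hp (by omega) 1 P ((P : ℤ) / E + 2)
  obtain ⟨m, hm, hQ⟩ := exists_pow_modEq_one_of_le hqP hq
  obtain ⟨D, hD⟩ := (Nat.modEq_iff_dvd.mp hQ.symm)
  push_cast at hD
  have hE' : (0 : ℤ) < E := by exact_mod_cast hE
  have hdiv := Int.emod_add_mul_ediv (P : ℤ) E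
  have hmod := Int.emod_lt_of_pos (P : ℤ) hE'
  have hmod₀ := Int.emod_nonneg (P : ℤ) hE'.ne'
  have hEP' : ((p : ℤ) * q + 1) * E ≤ P := by exact_mod_cast hEP
  have hq' : (2 : ℤ) ≤ q := by exact_mod_cast hq
  refine ⟨N, N * D, m, hNp.symm.dvd, ?_, by linear_combination -N * hD, ?_, ?_,
    by exact_mod_cast hm⟩
  · have hq_dvd : (q : ℤ) ∣ (N * D + 1) * P := by
      have hPN : (q : ℤ) ∣ P - N := hNq.dvd
      have hQ : (q : ℤ) ∣ N * q ^ (m + 1) :=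
        dvd_mul_of_dvd_right (dvd_pow_self _ m.succ_ne_zero) _
      have hsplit : (N * D + 1) * P = N * q ^ (m + 1) + (P - N) := by
        linear_combination (-N) * hD
      exact hsplit ▸ dvd_add hQ hPN
    exact (Nat.isCoprime_iff_coprime.mpr hqP).dvd_of_dvd_mul_right hq_dvd
  · nlinarith
  · nlinarith

theorem adicInterval_subset_Ico_of_Upt {p : ℕ} (hp : 0 < p) {M k : ℤ} {a b : ℝ}
    (ha : a + 1 / (p : ℝ) ^ (M + 1) ≤ Upt p M k)
    (hb : Upt p M k + p / (p : ℝ) ^ (M + 1) ≤ b) :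
    adicInterval p M k ⊆ Ico a b := by
  have hP : (0 : ℝ) < (p : ℝ) ^ (M + 1) := zpow_pos (by exact_mod_cast hp) _
  rw [adicInterval_eq_Ico_Upt hp.ne']
  refine Ico_subset_Ico (by linarith) (le_trans ?_ hb)
  gcongr
  linarith

theorem adicInterval_pair_of_numerators {p q : ℕ} (hp : 2 ≤ p) (hq : 2 ≤ q) {M m : ℕ}
    {s j : ℤ} {N K E : ℝ} (hs : N - 1 = p * s) (hj : K + 1 = q * j)
    (hKN : K * (p : ℝ) ^ (M + 1) + N = N * (q : ℝ) ^ (m + 1))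
    (hlow : (p : ℝ) ^ (M + 1) + E ≤ N * E) (hup : N * E ≤ q * (p : ℝ) ^ (M + 1))
    (hpE : p * E ≤ (p : ℝ) ^ (M + 1)) (hE : q * q ≤ E)
    (hlevel : (p : ℝ) ^ (M + 1) ≤ (q : ℝ) ^ m) :
    IsSmallestAdicContaining p M (s + 1) (adicInterval q m j) ∧
      adicInterval p M (s + 1) ⊆ Ico (1 / E) (q * q / E) ∧
      0 < Upt p M (s + 1) - Zpt q m j ∧
      Upt p M (s + 1) - Zpt q m j ≤ 1 / E * ((q : ℝ) ^ m)⁻¹ := by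
  have hq₂ : (2 : ℝ) ≤ q := by exact_mod_cast hq
  have hzpow (r : ℝ) (n : ℕ) : r ^ ((n : ℤ) + 1) = r ^ (n + 1) := by
    rw [← zpow_natCast, Nat.cast_succ]
  have hP : (0 : ℝ) < (p : ℝ) ^ (M + 1) := by positivity
  have hE₀ : 0 < E := by nlinarith
  have hN : 0 < N := by nlinarith
  have ht : Upt p M (s + 1) = N / (p : ℝ) ^ (M + 1) := by
    rw [Upt_eq (by omega), hzpow]; push_cast; congr 1; linarith
  have hsub : Upt p M (s + 1) - Zpt q m j = Upt p M (s + 1) / (q : ℝ) ^ (m + 1) := by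
    rw [ht, Zpt_eq (by omega), hzpow, ← hj]; field_simp; linear_combination -hKN
  refine ⟨?_, ?_, ?_, ?_⟩
  · refine isSmallestAdicContaining_of_sub_eq hp (by omega) ?_ ?_ (hzpow _ m ▸ hsub) ?_
    · rw [ht]; exact div_pos hN hP
    · rw [ht, div_lt_one hP]; nlinarith
    · rwa [hzpow, zpow_natCast]
  · refine adicInterval_subset_Ico_of_Upt (by omega) ?_ ?_ <;> rw [hzpow, ht]
    · rw [div_add_div _ _ hE₀.ne' hP.ne', div_le_div_iff₀ (by positivity) hP]; nlinarith
    · rw [← add_div, div_le_div_iff₀ hP hE₀]; nlinarith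
  · rw [hsub, ht]; exact div_pos (div_pos hN hP) (by positivity)
  · rw [hsub, ht, pow_succ]
    calc N / (p : ℝ) ^ (M + 1) / ((q : ℝ) ^ m * q)
        = N * E / (q * (p : ℝ) ^ (M + 1)) * (1 / E * ((q : ℝ) ^ m)⁻¹) := by field_simp
      _ ≤ 1 * (1 / E * ((q : ℝ) ^ m)⁻¹) := by
          gcongr; rw [div_le_one (by positivity)]; exact hup
      _ = _ := one_mul _

theorem exists_adicInterval_pair {p q : ℕ} (hpq : p.Coprime q) (hp : 2 ≤ p) (hq : 2 ≤ q)
    {a : ℕ} (ha : 2 ≤ a) :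
    ∃ mI kI mJ kJ : ℤ,
      IsSmallestAdicContaining p mJ kJ (adicInterval q mI kI) ∧
      adicInterval p mJ kJ ⊆ Ico ((q : ℝ) ^ (-(a : ℤ))) ((q : ℝ) ^ (2 - (a : ℤ))) ∧
      0 < Upt p mJ kJ - Zpt q mI kI ∧
      Upt p mJ kJ - Zpt q mI kI ≤ (q : ℝ) ^ (-(a : ℤ)) * (q : ℝ) ^ (-mI) := by
  obtain ⟨M, hM⟩ : ∃ M, (p * q + 1) * q ^ a ≤ p ^ (M + 1) :=
    ⟨_, (Nat.lt_pow_self (by omega)).le.trans' (Nat.le_succ _)⟩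
  obtain ⟨N, K, m, ⟨s, hs⟩, ⟨j, hj⟩, hKN, hlow, hup, hlevel⟩ :=
    exists_numerators hpq (by omega) hq (hpq.symm.pow_right (M + 1)) (by positivity) hM
  have hq₀ : (0 : ℝ) < q := by positivity
  have hpE : p * q ^ a ≤ p ^ (M + 1) := hM.trans' (Nat.mul_le_mul_right _ (by nlinarith))
  have hE : (q : ℝ) * q ≤ (q : ℝ) ^ a := by
    rw [← sq]; exact pow_le_pow_right₀ (by exact_mod_cast hq.trans' one_le_two) ha
  have hpair := adicInterval_pair_of_numerators hp hq (N := N) (K := K) (E := (q : ℝ) ^ a)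
    (by exact_mod_cast hs) (by exact_mod_cast hj) (by exact_mod_cast hKN)
    (by exact_mod_cast hlow) (by exact_mod_cast hup) (by exact_mod_cast hpE) hE
    (by exact_mod_cast hlevel)
  rw [zpow_sub₀ hq₀.ne', zpow_neg, zpow_natCast, ← one_div, zpow_two]
  exact ⟨m, j, M, s + 1, by simpa [zpow_neg] using hpair⟩

/-- (Selection of building blocks, two primes `p > q`.)  There are sequences of `q`-adic
intervals `I_ℓ ⊆ [0,1)` and positive integers `α_ℓ` such that: the smallest `p`-adic
intervals `J^ℓ ⊇ I_ℓ` are pairwise disjoint and contained in `[0,1)` (in particular the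
`I_ℓ` are pairwise disjoint); each value `α` is attained by only finitely many `α_ℓ`; and
`0 < Υ(J^ℓ) - Z(I_ℓ) ≤ q^(-100 α_ℓ) |I_ℓ|` for every `ℓ`. -/
theorem selection_two_primes (p q : ℕ) (hp : p.Prime) (hq : q.Prime) (hlt : q < p) :
    ∃ (mI kI : ℕ → ℤ) (α : ℕ → ℕ) (mJ kJ : ℕ → ℤ),
      (∀ ℓ, 1 ≤ α ℓ) ∧
      (∀ ℓ, adicInterval q (mI ℓ) (kI ℓ) ⊆ Set.Ico (0 : ℝ) 1) ∧
      (∀ ℓ, IsSmallestAdicContaining p (mJ ℓ) (kJ ℓ) (adicInterval q (mI ℓ) (kI ℓ))) ∧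
      (∀ ℓ, adicInterval p (mJ ℓ) (kJ ℓ) ⊆ Set.Ico (0 : ℝ) 1) ∧
      (∀ ℓ ℓ', ℓ ≠ ℓ' →
        Disjoint (adicInterval p (mJ ℓ) (kJ ℓ)) (adicInterval p (mJ ℓ') (kJ ℓ'))) ∧
      (∀ ℓ ℓ', ℓ ≠ ℓ' →
        Disjoint (adicInterval q (mI ℓ) (kI ℓ)) (adicInterval q (mI ℓ') (kI ℓ'))) ∧
      (∀ a : ℕ, {ℓ : ℕ | α ℓ = a}.Finite) ∧
      (∀ ℓ, 0 < Upt p (mJ ℓ) (kJ ℓ) - Zpt q (mI ℓ) (kI ℓ) ∧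
        Upt p (mJ ℓ) (kJ ℓ) - Zpt q (mI ℓ) (kI ℓ) ≤
          (q : ℝ) ^ (-(100 * (α ℓ : ℤ))) * (q : ℝ) ^ (-(mI ℓ))) := by
  have hpq : p.Coprime q := (Nat.coprime_primes hp hq).mpr hlt.ne'
  have hq₁ : (1 : ℝ) ≤ q := by exact_mod_cast hq.one_lt.le
  choose mI kI mJ kJ hsmall hband hpos hbound using fun ℓ : ℕ =>
    exists_adicInterval_pair hpq hp.two_le hq.two_le (a := 100 * (ℓ + 1)) (by omega)
  let f : ℕ → ℝ := fun ℓ => (q : ℝ) ^ (-(100 * (ℓ : ℤ)))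
  have hf : Antitone f := fun i j hij => zpow_le_zpow_right₀ hq₁ (by omega)
  have hJf (ℓ : ℕ) : adicInterval p (mJ ℓ) (kJ ℓ) ⊆ Ico (f (ℓ + 1)) (f ℓ) :=
    (hband ℓ).trans <|
      Ico_subset_Ico (by simp [f]) (zpow_le_zpow_right₀ hq₁ (by push_cast; omega))
  have hJdisj : Pairwise fun i j =>
      Disjoint (adicInterval p (mJ i) (kJ i)) (adicInterval p (mJ j) (kJ j)) := fun i j hij =>
    (hf.pairwise_disjoint_on_Ico_succ hij).mono (hJf i) (hJf j)
  have hJ01 (ℓ : ℕ) : adicInterval p (mJ ℓ) (kJ ℓ) ⊆ Ico 0 1 :=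
    (hJf ℓ).trans (Ico_subset_Ico (by positivity) (zpow_le_one_of_nonpos₀ hq₁ (by omega)))
  refine ⟨mI, kI, fun ℓ => ℓ + 1, mJ, kJ, fun ℓ => le_add_self,
    fun ℓ => (hsmall ℓ).1.trans (hJ01 ℓ), hsmall, hJ01, fun i j hij => hJdisj hij,
    fun i j hij => (hJdisj hij).mono (hsmall i).1 (hsmall j).1,
    fun a => (finite_singleton a).preimage (add_left_injective 1).injOn,
    fun ℓ => ⟨hpos ℓ, by simpa using hbound ℓ⟩⟩
end
end
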